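/- Let T be a trie and let p and q be palindromes such that p is a proper prefix of q and q occurs in T (i.e., pref_{|q|}(u) = q for some node u). Then the number of nodes u of T at which p occurs (i.e., with pref_{|p|}(u) = p) is strictly greater than the number of nodes u at which q occurs. Consequently, two distinct palindromes in Substr(T), one of which is a proper prefix of the other, never have the same set of occurrence nodes in T. -/

import Mathlib

/-- A trie over alphabet `α`: a finite rooted tree with a parent function,
every node reaches the root by iterating `par`, each non-root node carries the
label of the edge to its parent, and distinct children of a node have
distinct labels. -/
structure Trie (α : Type*) where
  V : Type
  fV : Fintype V
  dV : DecidableEq V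
  root : V
  par : V → V
  lab : V → α
  par_root : par root = root
  reaches_root : ∀ v : V, ∃ k : ℕ, par^[k] v = root
  distinct_labels : ∀ u v : V, u ≠ root → v ≠ root →
    par u = par v → lab u = lab v → u = v

attribute [instance] Trie.fV Trie.dV

namespace Trie

variable {α : Type*}

/-- The depth of a node: its distance to the root. -/
noncomputable def depth (T : Trie α) (v : T.V) : ℕ :=
  Nat.find (T.reaches_root v)

/-- `pref T u k` is the string of the `k` edge labels on the path from `u`
towards the root (read upward). -/
def pref (T : Trie α) : T.V → ℕ → List α
  | _, 0 => []
  | u, k + 1 => T.lab u :: T.pref (T.par u) k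

/-- A string `w` occurs at node `u` of the trie `T` if the upward path of
length `|w|` starting at `u` spells out `w`. -/
noncomputable def OccursAtNode (T : Trie α) (w : List α) (u : T.V) : Prop :=
  w.length ≤ T.depth u ∧ T.pref u w.length = w

end Trie

/-!
A palindromic prefix `p` of a palindrome `q` is also a suffix of `q`. Hence every
occurrence of `q` at a node `u` is an occurrence of `p` at `u`, and also yields an
occurrence of `p` at the ancestor of `u` that lies `|q| - |p|` levels higher. Applied
to an occurrence of `q` of minimal depth, this ancestor carries `p` but is too shallow
to carry `q`, so the occurrence set of `q` is a proper subset of that of `p`.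
-/

namespace Trie

variable {α : Type*} (T : Trie α)

theorem pref_length (u : T.V) (k : ℕ) : (T.pref u k).length = k := by
  induction k generalizing u with
  | zero => rfl
  | succ k ih => simp [pref, ih]

theorem pref_add (u : T.V) (j m : ℕ) :
    T.pref u (j + m) = T.pref u j ++ T.pref (T.par^[j] u) m := by
  induction j generalizing u with
  | zero => simp [pref]
  | succ j ih =>
    rw [Nat.succ_add]
    simp only [pref, ih (T.par u), Function.iterate_succ_apply, List.cons_append]

theorem pref_eq_take_pref (u : T.V) {j k : ℕ} (h : j ≤ k) :
    T.pref u j = (T.pref u k).take j := by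
  rw [← Nat.add_sub_cancel' h, pref_add, List.take_left' (T.pref_length u j)]

theorem pref_par_iterate (u : T.V) (j m : ℕ) :
    T.pref (T.par^[j] u) m = (T.pref u (j + m)).drop j := by
  rw [pref_add, List.drop_left' (T.pref_length u j)]

theorem par_iterate_depth (u : T.V) : T.par^[T.depth u] u = T.root :=
  Nat.find_spec (T.reaches_root u)

theorem depth_le_of_par_iterate_eq_root (u : T.V) {k : ℕ} (h : T.par^[k] u = T.root) :
    T.depth u ≤ k :=
  Nat.find_min' (T.reaches_root u) h

theorem depth_par_iterate (u : T.V) {j : ℕ} (hj : j ≤ T.depth u) :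
    T.depth (T.par^[j] u) = T.depth u - j := by
  apply le_antisymm
  · apply depth_le_of_par_iterate_eq_root
    rw [← Function.iterate_add_apply, Nat.sub_add_cancel hj, par_iterate_depth]
  · have := T.depth_le_of_par_iterate_eq_root u (k := T.depth (T.par^[j] u) + j) (by
      rw [Function.iterate_add_apply, par_iterate_depth])
    omega

variable {T}

theorem OccursAtNode.of_isPrefix {v w : List α} {u : T.V} (hwv : w <+: v)
    (hv : T.OccursAtNode v u) : T.OccursAtNode w u := by
  obtain ⟨hdepth, hpref⟩ := hv
  have hlen := hwv.length_le
  refine ⟨hlen.trans hdepth, ?_⟩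
  rw [T.pref_eq_take_pref u hlen, hpref, ← List.prefix_iff_eq_take.mp hwv]

theorem OccursAtNode.par_iterate_of_isSuffix {v w : List α} {u : T.V} (hwv : w <:+ v)
    (hv : T.OccursAtNode v u) : T.OccursAtNode w (T.par^[v.length - w.length] u) := by
  obtain ⟨hdepth, hpref⟩ := hv
  have hlen := hwv.length_le
  refine ⟨?_, ?_⟩
  · rw [T.depth_par_iterate u (by omega)]
    omega
  · rw [pref_par_iterate, Nat.sub_add_cancel hlen, hpref, ← List.suffix_iff_eq_drop.mp hwv]

end Trie

/-- If `p` and `q` are palindromes, `p` is a proper prefix of `q`, and `q`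
occurs in the trie `T`, then the number of nodes at which `p` occurs is
strictly greater than the number of nodes at which `q` occurs; in particular
the two occurrence sets differ. -/
theorem occ_nodes_proper_prefix_palindromes {α : Type*} (T : Trie α)
    (p q : List α) (hp : p = p.reverse) (hq : q = q.reverse)
    (hpq : p <+: q) (hlen : p.length < q.length)
    (hocc : ∃ u : T.V, T.OccursAtNode q u) :
    Set.ncard { u : T.V | T.OccursAtNode p u } >
      Set.ncard { u : T.V | T.OccursAtNode q u } ∧
    { u : T.V | T.OccursAtNode p u } ≠ { u : T.V | T.OccursAtNode q u } := by
  have hsuf : p <:+ q := by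
    rw [hp, hq]
    exact List.reverse_suffix.mpr hpq
  have hsub : { u : T.V | T.OccursAtNode q u } ⊆ { u : T.V | T.OccursAtNode p u } :=
    fun u hu => hu.of_isPrefix hpq
  obtain ⟨u, hu, hmin⟩ := Set.exists_min_image { u : T.V | T.OccursAtNode q u } T.depth
    (Set.toFinite _) hocc
  have hv := hu.par_iterate_of_isSuffix hsuf
  have hdepth : q.length ≤ T.depth u := hu.1
  have hvq : ¬ T.OccursAtNode q (T.par^[q.length - p.length] u) := fun hvq => by
    have hle := hmin _ hvq
    rw [T.depth_par_iterate u (by omega)] at hle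
    omega
  have hss := (Set.ssubset_iff_of_subset hsub).mpr ⟨_, hv, hvq⟩
  exact ⟨Set.ncard_lt_ncard hss (Set.toFinite _), hss.ne'⟩
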